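/- Let n ≥ 1, k ≥ 1, and α ∈ [n]^n, with all cars following the k-Naples parking rule. Then α is a k-Naples parking function (α ∈ PF_{n,k}) if and only if for every maximal interval [p,q] of U_α, spot p−1 is occupied at the end of the process, i.e. there exists i ∈ [n] with ψ_k(c_i) = p−1. Moreover, if α ∈ PF_{n,k}, then for every maximal interval [p,q] of U_α there exists i ∈ [n] with a_i ≥ p and ψ_k(c_i) = p−1. -/

import Mathlib

open Finset

/-- The spot where a single car parks on a one-way street with spots `1,…,n`:
`occ` is the set of already occupied spots, `p` is the car's preference, and
`r` is its backward allowance (it follows the `r`-Naples rule).  If spot `p`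
is free the car parks there; otherwise it checks spots `p-1, p-2, …, max (p-r) 1`
and parks in the first free one among these; otherwise it parks in the smallest
free spot `> p` (and `≤ n`); `none` means the car fails to park. -/
def parkSpot (n : ℕ) (occ : Finset ℕ) (p r : ℕ) : Option ℕ :=
  if p ∈ occ then
    if hb : ((Finset.Ico (max 1 (p - r)) p).filter (fun j => j ∉ occ)).Nonempty then
      some (((Finset.Ico (max 1 (p - r)) p).filter (fun j => j ∉ occ)).max' hb)
    else if hf : ((Finset.Ioc p n).filter (fun j => j ∉ occ)).Nonempty then
      some (((Finset.Ioc p n).filter (fun j => j ∉ occ)).min' hf)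
    else none
  else some p

/-- The set of occupied spots after the first `i` of the `m` cars (with
preferences `a` and backward allowances `r`) have attempted to park on a
street with `n` spots. -/
def occUpTo (n m : ℕ) (a r : Fin m → ℕ) : ℕ → Finset ℕ
  | 0 => ∅
  | i + 1 =>
    let occ := occUpTo n m a r i
    if h : i < m then
      match parkSpot n occ (a ⟨i, h⟩) (r ⟨i, h⟩) with
      | some s => insert s occ
      | none => occ
    else occ

/-- The outcome map: the spot where car `c_i` parks (`none` if it fails to park),
when the `m` cars with preferences `a` park on `n` spots, car `c_i` following
the `r i`-Naples rule. -/
def outcome (n m : ℕ) (a r : Fin m → ℕ) (i : Fin m) : Option ℕ :=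
  parkSpot n (occUpTo n m a r i.val) (a i) (r i)

/-- The outcome map with values in `ℕ∞`: failure to park is recorded as `∞`. -/
def outcomeE (n m : ℕ) (a r : Fin m → ℕ) (i : Fin m) : ENat :=
  (outcome n m a r i).elim ⊤ (fun s => (s : ENat))

/-- All `m` cars (preferences `a`, car `c_i` following the `r i`-Naples rule)
are able to park on the street with `n` spots.  For `m = n` this says that `r`
is a parking strategy for `a`, i.e. `(a, r) ∈ PR_n`. -/
def AllPark (n m : ℕ) (a r : Fin m → ℕ) : Prop :=
  ∀ i : Fin m, (outcome n m a r i).isSome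

instance (n m : ℕ) (a r : Fin m → ℕ) : Decidable (AllPark n m a r) := by
  unfold AllPark; infer_instance

/-- `a ∈ PF_{n,k}`: `a` is a `k`-Naples parking function of length `n`. -/
def NaplesPF (n k : ℕ) (a : Fin n → ℕ) : Prop :=
  AllPark n n a (fun _ => k)

instance (n k : ℕ) (a : Fin n → ℕ) : Decidable (NaplesPF n k a) := by
  unfold NaplesPF; infer_instance

/-- `a ∈ PF_n`: `a` is a (standard) parking function of length `n`. -/
def IsPF (n : ℕ) (a : Fin n → ℕ) : Prop := NaplesPF n 0 a

instance (n : ℕ) (a : Fin n → ℕ) : Decidable (IsPF n a) := by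
  unfold IsPF; infer_instance

/-- `u_α(j) = Σ_{i=j}^n |α|_i − (n−j+1) = #{i : a_i ≥ j} − (n−j+1)`. -/
def ucount (n : ℕ) (a : Fin n → ℕ) (j : ℕ) : ℤ :=
  ((Finset.univ.filter (fun i : Fin n => j ≤ a i)).card : ℤ) - ((n : ℤ) - (j : ℤ) + 1)

/-- `U_α = {j ∈ [n] : u_α(j) ≥ 1}`. -/
def Uset (n : ℕ) (a : Fin n → ℕ) : Finset ℕ :=
  (Finset.Icc 1 n).filter (fun j => 1 ≤ ucount n a j)

/-- A parking preference of length `n` is complete if `U_α = {2,…,n}`. -/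
def Complete (n : ℕ) (a : Fin n → ℕ) : Prop :=
  Uset n a = Finset.Icc 2 n

instance (n : ℕ) (a : Fin n → ℕ) : Decidable (Complete n a) := by
  unfold Complete; infer_instance

/-- `[p,q]` is a maximal interval of `U_α`. -/
def MaxInterval (n : ℕ) (a : Fin n → ℕ) (p q : ℕ) : Prop :=
  p ≤ q ∧ (∀ j, p ≤ j → j ≤ q → j ∈ Uset n a) ∧ p - 1 ∉ Uset n a ∧ q + 1 ∉ Uset n a

/-!
If every car parks, every spot is occupied. Let `[p,q]` be a maximal interval of `U_α`. Since
`u_α(p-1) ≤ 0 < u_α(p)`, no car prefers `p-1`, and more than `n-p+1` cars prefer a spot `≥ p`,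
so one of them, `c`, parks at some `z < p`. Suppose the car `j` in spot `p-1` preferred a spot
`< p-1`: it drove forward, so its whole backward window was full and no spot strictly between
`a_j` and `p-1` was free. Car `c` backs up over `p-1`, so it comes after `j` and `z` was free
when `j` parked; hence `z < a_j - k ≤ a_c - k`, outside the window of `c`. So `p-1` is taken by
a car preferring a spot `≥ p`.

Conversely, if some car fails, let `s` be the first free spot. The cars parked in `[1,s-1]` are
exactly those preferring a spot `< s`, and nobody prefers `s`; so `u_α(s) = 0` and
`u_α(s+1) = 1`, and `s+1` starts a maximal interval of `U_α` whose spot `s` stays empty.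
-/

section ParkSpot

variable {n : ℕ} {occ : Finset ℕ} {p r s : ℕ}

lemma parkSpot_of_notMem (h : p ∉ occ) : parkSpot n occ p r = some p := by
  simp [parkSpot, h]

lemma notMem_of_parkSpot_eq_some (h : parkSpot n occ p r = some s) : s ∉ occ := by
  unfold parkSpot at h
  split_ifs at h with hp hb hf <;> cases h
  · exact (mem_filter.1 (max'_mem _ hb)).2
  · exact (mem_filter.1 (min'_mem _ hf)).2
  · exact hp

lemma parkSpot_backward (h : parkSpot n occ p r = some s) (hs : s < p) :
    p - r ≤ s ∧ 1 ≤ s ∧ ∀ y, s < y → y < p → y ∈ occ := by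
  unfold parkSpot at h
  split_ifs at h with hp hb hf <;> cases h
  · obtain ⟨hmem, -⟩ := mem_filter.1 (max'_mem _ hb)
    rw [mem_Ico, max_le_iff] at hmem
    refine ⟨hmem.1.2, hmem.1.1, fun y hsy hyp => ?_⟩
    by_contra hy
    have hyw : y ∈ (Ico (max 1 (p - r)) p).filter (· ∉ occ) :=
      mem_filter.2 ⟨mem_Ico.2 ⟨(max_le_iff.2 hmem.1).trans hsy.le, hyp⟩, hy⟩
    exact absurd (le_max' _ y hyw) (not_le.2 hsy)
  · exact absurd (mem_Ioc.1 (mem_filter.1 (min'_mem _ hf)).1).1 (not_lt.2 hs.le)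
  · exact absurd hs (lt_irrefl _)

lemma parkSpot_forward (h : parkSpot n occ p r = some s) (hs : p < s) :
    s ≤ n ∧ ∀ y, p - r ≤ y → 1 ≤ y → y ≤ p → y ∈ occ := by
  unfold parkSpot at h
  split_ifs at h with hp hb hf <;> cases h
  · exact absurd (mem_Ico.1 (mem_filter.1 (max'_mem _ hb)).1).2 (not_lt.2 hs.le)
  · refine ⟨(mem_Ioc.1 (mem_filter.1 (min'_mem _ hf)).1).2, fun y hry h1y hyp => ?_⟩
    rcases hyp.lt_or_eq with hyp | rfl
    · by_contra hy
      exact hb ⟨y, mem_filter.2 ⟨mem_Ico.2 ⟨max_le h1y hry, hyp⟩, hy⟩⟩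
    · exact hp
  · exact absurd hs (lt_irrefl _)

lemma parkSpot_le_of_notMem (h : parkSpot n occ p r = some s) {y : ℕ} (hpy : p < y)
    (hyn : y ≤ n) (hy : y ∉ occ) : s ≤ y := by
  unfold parkSpot at h
  split_ifs at h with hp hb hf <;> cases h
  · exact ((mem_Ico.1 (mem_filter.1 (max'_mem _ hb)).1).2.trans hpy).le
  · exact min'_le _ y (mem_filter.2 ⟨mem_Ioc.2 ⟨hpy, hyn⟩, hy⟩)
  · exact hpy.le

lemma parkSpot_isSome_of_notMem {y : ℕ} (hpy : p < y) (hyn : y ≤ n) (hy : y ∉ occ) :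
    (parkSpot n occ p r).isSome := by
  unfold parkSpot
  split_ifs with hp hb hf <;> try rfl
  exact absurd ⟨y, mem_filter.2 ⟨mem_Ioc.2 ⟨hpy, hyn⟩, hy⟩⟩ hf

lemma parkSpot_mem_Icc (hp : p ∈ Icc 1 n) (h : parkSpot n occ p r = some s) : s ∈ Icc 1 n := by
  rw [mem_Icc] at hp ⊢
  rcases lt_trichotomy s p with hs | rfl | hs
  · exact ⟨(parkSpot_backward h hs).2.1, hs.le.trans hp.2⟩
  · exact hp
  · exact ⟨hp.1.trans hs.le, (parkSpot_forward h hs).1⟩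

end ParkSpot

section Occupancy

variable {n m : ℕ} {a r : Fin m → ℕ}

lemma mem_occUpTo_succ {t : ℕ} (ht : t < m) {s : ℕ} :
    s ∈ occUpTo n m a r (t + 1) ↔ s ∈ occUpTo n m a r t ∨ outcome n m a r ⟨t, ht⟩ = some s := by
  rw [occUpTo, dif_pos ht]
  change s ∈ (match outcome n m a r ⟨t, ht⟩ with
    | some s' => insert s' (occUpTo n m a r t)
    | none => occUpTo n m a r t) ↔ _
  cases outcome n m a r ⟨t, ht⟩ <;> simp [eq_comm, or_comm]

lemma occUpTo_succ_of_le {t : ℕ} (ht : m ≤ t) : occUpTo n m a r (t + 1) = occUpTo n m a r t := by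
  rw [occUpTo, dif_neg (not_lt.2 ht)]

lemma mem_occUpTo_iff {t s : ℕ} :
    s ∈ occUpTo n m a r t ↔ ∃ i : Fin m, i.val < t ∧ outcome n m a r i = some s := by
  induction t with
  | zero => simp [occUpTo]
  | succ t ih =>
    by_cases ht : t < m
    · rw [mem_occUpTo_succ ht, ih]
      simp only [Nat.lt_succ_iff_lt_or_eq, or_and_right, exists_or]
      refine or_congr Iff.rfl ⟨fun ho => ⟨_, rfl, ho⟩, fun ⟨i, hi, ho⟩ => ?_⟩
      subst hi
      exact ho
    · rw [occUpTo_succ_of_le (not_lt.1 ht), ih]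
      exact exists_congr fun i => and_congr_left fun _ =>
        ⟨fun h => h.trans (Nat.lt_succ_self t), fun _ => i.2.trans_le (not_lt.1 ht)⟩

lemma occUpTo_mono : Monotone (occUpTo n m a r) := fun _ _ hle _ hs =>
  let ⟨i, hi, ho⟩ := mem_occUpTo_iff.1 hs
  mem_occUpTo_iff.2 ⟨i, hi.trans_le hle, ho⟩

lemma outcome_notMem_occUpTo {i : Fin m} {s : ℕ} (h : outcome n m a r i = some s) :
    s ∉ occUpTo n m a r i :=
  notMem_of_parkSpot_eq_some h

lemma outcome_injective {i j : Fin m} {s : ℕ} (hi : outcome n m a r i = some s)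
    (hj : outcome n m a r j = some s) : i = j := by
  rcases lt_trichotomy i.val j.val with h | h | h
  · exact absurd (mem_occUpTo_iff.2 ⟨i, h, hi⟩) (outcome_notMem_occUpTo hj)
  · exact Fin.ext h
  · exact absurd (mem_occUpTo_iff.2 ⟨j, h, hj⟩) (outcome_notMem_occUpTo hi)

lemma outcome_mem_Icc {i : Fin m} {s : ℕ} (ha : a i ∈ Icc 1 n)
    (h : outcome n m a r i = some s) : s ∈ Icc 1 n :=
  parkSpot_mem_Icc ha h

lemma card_le_card_of_outcome_mapsTo {I : Finset (Fin m)} {T : Finset ℕ}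
    (h : ∀ i ∈ I, ∃ s ∈ T, outcome n m a r i = some s) : #I ≤ #T := by
  choose! f hfT hf using h
  exact card_le_card_of_injOn f hfT fun i hi j hj hij =>
    outcome_injective (hf i hi) (hij ▸ hf j hj)

lemma card_le_card_of_outcome_surjOn {I : Finset (Fin m)} {T : Finset ℕ}
    (h : ∀ s ∈ T, ∃ i ∈ I, outcome n m a r i = some s) : #T ≤ #I :=
  card_le_card_of_surjOn (fun i => (outcome n m a r i).getD 0) fun s hs =>
    let ⟨i, hi, ho⟩ := h s hs
    ⟨i, hi, by simp [ho]⟩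

end Occupancy

section FreeSpot

variable {n m : ℕ} {a r : Fin m → ℕ} {s : ℕ}

lemma notMem_occUpTo_of_notMem_final (hs : s ∉ occUpTo n m a r m) (i : Fin m) :
    s ∉ occUpTo n m a r i :=
  fun h => hs (occUpTo_mono i.2.le h)

lemma outcome_ne_of_notMem_final (hs : s ∉ occUpTo n m a r m) (i : Fin m) :
    outcome n m a r i ≠ some s :=
  fun h => hs (mem_occUpTo_iff.2 ⟨i, i.2, h⟩)

lemma pref_ne_of_notMem_final (hs : s ∉ occUpTo n m a r m) (i : Fin m) : a i ≠ s := by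
  rintro rfl
  exact outcome_ne_of_notMem_final hs i
    (parkSpot_of_notMem (notMem_occUpTo_of_notMem_final hs i))

lemma exists_outcome_lt_of_notMem_final (hs : s ∉ occUpTo n m a r m) (hsn : s ≤ n) {i : Fin m}
    (hi : a i < s) : ∃ z, outcome n m a r i = some z ∧ z < s := by
  have hsi := notMem_occUpTo_of_notMem_final hs i
  obtain ⟨z, hz⟩ := Option.isSome_iff_exists.1 (parkSpot_isSome_of_notMem hi hsn hsi)
  refine ⟨z, hz, (parkSpot_le_of_notMem hz hi hsn hsi).lt_of_ne ?_⟩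
  rintro rfl
  exact outcome_ne_of_notMem_final hs i hz

lemma lt_outcome_of_notMem_final (hs : s ∉ occUpTo n m a r m) {i : Fin m} {z : ℕ}
    (hi : s < a i) (hz : outcome n m a r i = some z) : s < z := by
  by_contra! hzs
  rcases hzs.lt_or_eq with hzs | rfl
  · exact notMem_occUpTo_of_notMem_final hs i
      ((parkSpot_backward hz (hzs.trans hi)).2.2 s hzs hi)
  · exact outcome_ne_of_notMem_final hs i hz

end FreeSpot

section AllCars

variable {n : ℕ} {a r : Fin n → ℕ}

lemma AllPark.occUpTo_eq_Icc (ha : ∀ i, a i ∈ Icc 1 n) (h : AllPark n n a r) :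
    occUpTo n n a r n = Icc 1 n := by
  refine eq_of_subset_of_card_le (fun s hs => ?_) ?_
  · obtain ⟨i, -, hi⟩ := mem_occUpTo_iff.1 hs
    exact outcome_mem_Icc (ha i) hi
  · have := card_le_card_of_outcome_mapsTo (I := univ) (T := occUpTo n n a r n) fun i _ =>
      let ⟨s, hs⟩ := Option.isSome_iff_exists.1 (h i)
      ⟨s, mem_occUpTo_iff.2 ⟨i, i.2, hs⟩, hs⟩
    simpa using this

lemma exists_notMem_occUpTo_of_not_allPark (h : ¬ AllPark n n a r) :
    ∃ s ∈ Icc 1 n, s ∉ occUpTo n n a r n := by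
  obtain ⟨i₀, hi₀⟩ : ∃ i₀, outcome n n a r i₀ = none := by simpa [AllPark] using h
  by_contra! hfull
  have hle : #(occUpTo n n a r n) ≤ #(univ.erase i₀) :=
    card_le_card_of_outcome_surjOn fun s hs =>
      let ⟨i, _, hi⟩ := mem_occUpTo_iff.1 hs
      ⟨i, mem_erase.2 ⟨by rintro rfl; simp [hi₀] at hi, mem_univ i⟩, hi⟩
  have hge := card_le_card hfull
  rw [card_erase_of_mem (mem_univ i₀), card_univ, Fintype.card_fin] at hle
  rw [Nat.card_Icc] at hge
  have := i₀.pos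
  omega

end AllCars

lemma not_backward_past_forward {n m k : ℕ} {a : Fin m → ℕ} {j c : Fin m} {t z : ℕ}
    (hj : outcome n m a (fun _ => k) j = some t) (hjt : a j < t)
    (hc : outcome n m a (fun _ => k) c = some z) (hzt : z < t) (htc : t < a c) : False := by
  obtain ⟨hcz, hz1, hcocc⟩ := parkSpot_backward hc (hzt.trans htc)
  have hjc : j.val < c.val := by
    obtain ⟨i, hic, hi⟩ := mem_occUpTo_iff.1 (hcocc t hzt htc)
    exact outcome_injective hi hj ▸ hic
  have hzj : z ∉ occUpTo n m a (fun _ => k) j :=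
    fun h => outcome_notMem_occUpTo hc (occUpTo_mono hjc.le h)
  obtain ⟨htn, hjocc⟩ := parkSpot_forward hj hjt
  have hzaj : z ≤ a j := by
    by_contra! hjz
    exact absurd (parkSpot_le_of_notMem hj hjz (hzt.le.trans htn) hzj) (not_le.2 hzt)
  have : ¬ a j - k ≤ z := fun h => hzj (hjocc z h hz1 hzaj)
  beta_reduce at hcz
  omega

lemma exists_outcome_lt_of_card_lt {n m p : ℕ} {a r : Fin m → ℕ} {I : Finset (Fin m)}
    (hpark : ∀ i ∈ I, ∃ z ≤ n, outcome n m a r i = some z) (hI : n + 1 - p < #I) :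
    ∃ i ∈ I, ∃ z < p, outcome n m a r i = some z := by
  by_contra! hge
  have := card_le_card_of_outcome_mapsTo (T := Icc p n) fun i hi =>
    let ⟨z, hzn, hz⟩ := hpark i hi
    ⟨z, mem_Icc.2 ⟨not_lt.1 fun hzp => hge i hi z hzp hz, hzn⟩, hz⟩
  rw [Nat.card_Icc] at this
  omega

section Excess

variable {n : ℕ} {a : Fin n → ℕ}

lemma ucount_succ (j : ℕ) : ucount n a (j + 1) = ucount n a j + 1 - #{i | a i = j} := by
  have hsplit : #{i | j ≤ a i} = #{i | j + 1 ≤ a i} + #{i | a i = j} := by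
    simp only [card_filter, ← sum_add_distrib]
    exact sum_congr rfl fun i _ => by split_ifs <;> omega
  simp only [ucount, hsplit]
  push_cast
  ring

lemma ucount_one (ha : ∀ i, 1 ≤ a i) : ucount n a 1 = 0 := by
  simp [ucount, filter_true_of_mem fun i _ => ha i]

lemma ucount_succ_self (ha : ∀ i, a i ≤ n) : ucount n a (n + 1) = 0 := by
  simpa [ucount] using ha

lemma exists_maxInterval {p : ℕ} (hp : p ∈ Uset n a) (hp' : p - 1 ∉ Uset n a) :
    ∃ q, MaxInterval n a p q := by
  have hpn := (mem_Icc.1 (mem_filter.1 hp).1).2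
  have hex : ∃ q, p ≤ q ∧ q + 1 ∉ Uset n a :=
    ⟨n, hpn, fun h => by have := (mem_Icc.1 (mem_filter.1 h).1).2; omega⟩
  refine ⟨Nat.find hex, (Nat.find_spec hex).1, fun j hpj hjq => ?_, hp', (Nat.find_spec hex).2⟩
  induction j, hpj using Nat.le_induction with
  | base => exact hp
  | succ j hpj ih =>
    by_contra hj
    exact Nat.find_min hex (by omega : j < Nat.find hex) ⟨hpj, hj⟩

end Excess

section MaxInterval

variable {n : ℕ} {a : Fin n → ℕ} {p q : ℕ}

lemma MaxInterval.mem_Uset (h : MaxInterval n a p q) : p ∈ Uset n a :=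
  h.2.1 p le_rfl h.1

lemma MaxInterval.two_le (ha : ∀ i, 1 ≤ a i) (h : MaxInterval n a p q) : 2 ≤ p := by
  have hp := mem_filter.1 h.mem_Uset
  have := (mem_Icc.1 hp.1).1
  by_contra! hp1
  obtain rfl : p = 1 := by omega
  have := ucount_one ha
  omega

lemma MaxInterval.lt_card (h : MaxInterval n a p q) : n + 1 - p < #{i | p ≤ a i} := by
  have hp := mem_filter.1 h.mem_Uset
  have := (mem_Icc.1 hp.1).2
  have := hp.2
  unfold ucount at this
  omega

lemma MaxInterval.pref_ne_pred (ha : ∀ i, 1 ≤ a i) (h : MaxInterval n a p q) (i : Fin n) :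
    a i ≠ p - 1 := by
  have hp2 := h.two_le ha
  have hp := mem_filter.1 h.mem_Uset
  have hp1 : ¬ 1 ≤ ucount n a (p - 1) := fun hu =>
    h.2.2.1 (mem_filter.2 ⟨mem_Icc.2 ⟨by omega, by have := (mem_Icc.1 hp.1).2; omega⟩, hu⟩)
  have hsucc := ucount_succ (a := a) (p - 1)
  rw [Nat.sub_add_cancel (by omega : 1 ≤ p)] at hsucc
  have hcard : #{j | a j = p - 1} = 0 := by have := hp.2; omega
  intro hi
  exact (filter_eq_empty_iff.1 (card_eq_zero.1 hcard)) (mem_univ i) hi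

end MaxInterval

section Main

variable {n k : ℕ} {a : Fin n → ℕ}

lemma ucount_eq_zero_of_first_free {r : Fin n → ℕ} (ha : ∀ i, a i ∈ Icc 1 n) {s : ℕ}
    (hs : s ∈ Icc 1 n) (hfree : s ∉ occUpTo n n a r n)
    (hmin : ∀ t, 1 ≤ t → t < s → t ∈ occUpTo n n a r n) : ucount n a s = 0 := by
  obtain ⟨hs1, hsn⟩ := mem_Icc.1 hs
  have hle : #{i | a i < s} ≤ #(Icc 1 (s - 1)) :=
    card_le_card_of_outcome_mapsTo fun i hi => by
      obtain ⟨z, hz, hzs⟩ := exists_outcome_lt_of_notMem_final hfree hsn (mem_filter.1 hi).2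
      exact ⟨z, mem_Icc.2 ⟨(mem_Icc.1 (outcome_mem_Icc (ha i) hz)).1, by omega⟩, hz⟩
  have hge : #(Icc 1 (s - 1)) ≤ #{i | a i < s} :=
    card_le_card_of_outcome_surjOn fun t ht => by
      obtain ⟨ht1, hts⟩ := mem_Icc.1 ht
      obtain ⟨i, -, hi⟩ := mem_occUpTo_iff.1 (hmin t ht1 (by omega))
      refine ⟨i, mem_filter.2 ⟨mem_univ i, ?_⟩, hi⟩
      by_contra! hsi
      have := lt_outcome_of_notMem_final hfree
        (hsi.lt_of_ne' (pref_ne_of_notMem_final hfree i)) hi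
      omega
  have hsplit := card_filter_add_card_filter_not (s := (univ : Finset (Fin n))) (fun i => a i < s)
  simp only [card_univ, Fintype.card_fin, not_lt, Nat.card_Icc] at hsplit hle hge
  unfold ucount
  omega

lemma naplesPF_of_forall_maxInterval (ha : ∀ i, a i ∈ Icc 1 n)
    (h : ∀ p q, MaxInterval n a p q → ∃ i, outcome n n a (fun _ => k) i = some (p - 1)) :
    NaplesPF n k a := by
  by_contra hN
  have hex := exists_notMem_occUpTo_of_not_allPark hN
  obtain ⟨s, ⟨hs, hfree⟩, hmin⟩ : ∃ s, (s ∈ Icc 1 n ∧ s ∉ occUpTo n n a (fun _ => k) n) ∧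
      ∀ t < s, ¬ (t ∈ Icc 1 n ∧ t ∉ occUpTo n n a (fun _ => k) n) :=
    ⟨Nat.find hex, Nat.find_spec hex, fun _ => Nat.find_min hex⟩
  have hus := ucount_eq_zero_of_first_free ha hs hfree fun t ht1 hts => by
    by_contra hfree'
    exact hmin t hts ⟨mem_Icc.2 ⟨ht1, by have := (mem_Icc.1 hs).2; omega⟩, hfree'⟩
  have hus1 : ucount n a (s + 1) = 1 := by
    rw [ucount_succ, hus, filter_false_of_mem fun i _ => pref_ne_of_notMem_final hfree i]
    simp
  have hsn : s + 1 ≤ n := by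
    by_contra!
    obtain rfl : s = n := by have := (mem_Icc.1 hs).2; omega
    rw [ucount_succ_self fun i => (mem_Icc.1 (ha i)).2] at hus1
    omega
  obtain ⟨q, hq⟩ := exists_maxInterval (p := s + 1)
    (mem_filter.2 ⟨mem_Icc.2 ⟨by omega, hsn⟩, hus1.ge⟩) (by simp [Uset, hus])
  obtain ⟨i, hi⟩ := h _ _ hq
  exact outcome_ne_of_notMem_final hfree i hi

lemma NaplesPF.exists_pref_ge_outcome_eq_pred (ha : ∀ i, a i ∈ Icc 1 n) (hN : NaplesPF n k a)
    {p q : ℕ} (h : MaxInterval n a p q) :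
    ∃ i, p ≤ a i ∧ outcome n n a (fun _ => k) i = some (p - 1) := by
  have ha1 i := (mem_Icc.1 (ha i)).1
  have hp2 := h.two_le ha1
  have hpn := (mem_Icc.1 (mem_filter.1 h.mem_Uset).1).2
  have hocc : p - 1 ∈ occUpTo n n a (fun _ => k) n := by
    rw [AllPark.occUpTo_eq_Icc ha hN, mem_Icc]
    omega
  obtain ⟨j, -, hj⟩ := mem_occUpTo_iff.1 hocc
  by_cases hpj : p ≤ a j
  · exact ⟨j, hpj, hj⟩
  have hjp : a j < p - 1 := by have := h.pref_ne_pred ha1 j; omega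
  have hpark : ∀ i ∈ ({i | p ≤ a i} : Finset (Fin n)), ∃ z ≤ n,
      outcome n n a (fun _ => k) i = some z := fun i _ =>
    let ⟨z, hz⟩ := Option.isSome_iff_exists.1 (hN i)
    ⟨z, (mem_Icc.1 (outcome_mem_Icc (ha i) hz)).2, hz⟩
  obtain ⟨c, hc, z, hzp, hz⟩ := exists_outcome_lt_of_card_lt hpark h.lt_card
  have hpc := (mem_filter.1 hc).2
  rcases (Nat.le_sub_one_of_lt hzp).lt_or_eq with hzp | rfl
  · exact (not_backward_past_forward hj hjp hz hzp (by omega)).elim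
  · exact ⟨c, hpc, hz⟩

end Main

theorem statement12_general (n k : ℕ) (a : Fin n → ℕ)
    (ha : ∀ i, a i ∈ Finset.Icc 1 n) :
    (NaplesPF n k a ↔
      ∀ p q, MaxInterval n a p q →
        ∃ i : Fin n, outcome n n a (fun _ => k) i = some (p - 1)) ∧
    (NaplesPF n k a →
      ∀ p q, MaxInterval n a p q →
        ∃ i : Fin n, p ≤ a i ∧ outcome n n a (fun _ => k) i = some (p - 1)) := by
  have moreover (hN : NaplesPF n k a) p q (h : MaxInterval n a p q) :=
    hN.exists_pref_ge_outcome_eq_pred ha h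
  refine ⟨⟨fun hN p q h => ?_, naplesPF_of_forall_maxInterval ha⟩, moreover⟩
  obtain ⟨i, -, hi⟩ := moreover hN p q h
  exact ⟨i, hi⟩

/-- `α ∈ PF_{n,k}` iff for every maximal interval `[p,q]` of `U_α`
the spot `p−1` is occupied at the end of the process; moreover, if `α ∈ PF_{n,k}`
then for every such interval spot `p−1` is occupied by a car with preference `≥ p`. -/
theorem statement12 (n k : ℕ) (hn : 1 ≤ n) (hk : 1 ≤ k) (a : Fin n → ℕ)
    (ha : ∀ i, a i ∈ Finset.Icc 1 n) :
    (NaplesPF n k a ↔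
      ∀ p q, MaxInterval n a p q →
        ∃ i : Fin n, outcome n n a (fun _ => k) i = some (p - 1)) ∧
    (NaplesPF n k a →
      ∀ p q, MaxInterval n a p q →
        ∃ i : Fin n, p ≤ a i ∧ outcome n n a (fun _ => k) i = some (p - 1)) :=
  statement12_general n k a ha
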